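/- Let X ∈ B(H_A, H_C) be a bounded operator between Hilbert spaces. Then the operator norm of X (I + X*X)^{-1/2} equals ‖X‖ / (1 + ‖X‖²)^{1/2}. -/

import Mathlib

/-!
Write `S = (I + X*X)^{1/2}` and `k = √(1 + ‖X‖²)`. Since `S` is self-adjoint,
`‖S u‖² = ‖u‖² + ‖X u‖²`. Bounding `‖X u‖ ≤ ‖X‖ ‖u‖` in this identity gives both
`k ‖X u‖ ≤ ‖X‖ ‖S u‖`, i.e. `‖X S⁻¹‖ ≤ ‖X‖ / k` after substituting `u = S⁻¹ x`, and
`‖S u‖ ≤ k ‖u‖`, whence `‖X u‖ ≤ ‖X S⁻¹‖ ‖S u‖ ≤ ‖X S⁻¹‖ k ‖u‖`, i.e. `‖X‖ ≤ k ‖X S⁻¹‖`.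
-/

open ContinuousLinearMap

namespace ContinuousLinearMap

variable {𝕜 E F : Type*} [RCLike 𝕜]
  [NormedAddCommGroup E] [InnerProductSpace 𝕜 E] [CompleteSpace E]
  [NormedAddCommGroup F] [InnerProductSpace 𝕜 F] [CompleteSpace F]
  {S : E →L[𝕜] E} {X : E →L[𝕜] F}

theorem norm_sq_apply_of_sq_eq_one_add_adjoint_comp (hS : IsSelfAdjoint S)
    (hSsq : S ∘L S = 1 + adjoint X ∘L X) (u : E) :
    ‖S u‖ ^ 2 = ‖u‖ ^ 2 + ‖X u‖ ^ 2 := by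
  rw [apply_norm_sq_eq_inner_adjoint_right, hS.adjoint_eq, hSsq, add_apply, one_apply_eq_self,
    inner_add_right, map_add, ← apply_norm_sq_eq_inner_adjoint_right, inner_self_eq_norm_sq]

theorem norm_le_norm_apply_of_sq_eq_one_add_adjoint_comp (hS : IsSelfAdjoint S)
    (hSsq : S ∘L S = 1 + adjoint X ∘L X) (u : E) : ‖u‖ ≤ ‖S u‖ := by
  refine (pow_le_pow_iff_left₀ (norm_nonneg _) (norm_nonneg _) two_ne_zero).1 ?_
  rw [norm_sq_apply_of_sq_eq_one_add_adjoint_comp hS hSsq]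
  exact le_add_of_nonneg_right (sq_nonneg _)

theorem norm_apply_le_sqrt_one_add_sq_mul_of_sq_eq_one_add_adjoint_comp (hS : IsSelfAdjoint S)
    (hSsq : S ∘L S = 1 + adjoint X ∘L X) (u : E) :
    ‖S u‖ ≤ √(1 + ‖X‖ ^ 2) * ‖u‖ := by
  refine (pow_le_pow_iff_left₀ (norm_nonneg _) (by positivity) two_ne_zero).1 ?_
  rw [norm_sq_apply_of_sq_eq_one_add_adjoint_comp hS hSsq, mul_pow,
    Real.sq_sqrt (by positivity)]
  nlinarith [X.le_opNorm u, norm_nonneg (X u)]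

theorem sqrt_one_add_sq_mul_norm_apply_le_of_sq_eq_one_add_adjoint_comp (hS : IsSelfAdjoint S)
    (hSsq : S ∘L S = 1 + adjoint X ∘L X) (u : E) :
    √(1 + ‖X‖ ^ 2) * ‖X u‖ ≤ ‖X‖ * ‖S u‖ := by
  refine (pow_le_pow_iff_left₀ (by positivity) (by positivity) two_ne_zero).1 ?_
  rw [mul_pow, mul_pow, norm_sq_apply_of_sq_eq_one_add_adjoint_comp hS hSsq,
    Real.sq_sqrt (by positivity)]
  nlinarith [X.le_opNorm u, norm_nonneg (X u), norm_nonneg X]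

end ContinuousLinearMap

/-- For any bounded operator `X` between Hilbert spaces,
`‖X (I + X*X)^{-1/2}‖ = ‖X‖ / (1 + ‖X‖²)^{1/2}`. -/
theorem norm_comp_inv_sqrt_one_add
    {HA HC : Type*} [NormedAddCommGroup HA] [InnerProductSpace ℂ HA] [CompleteSpace HA]
    [NormedAddCommGroup HC] [InnerProductSpace ℂ HC] [CompleteSpace HC]
    (X : HA →L[ℂ] HC)
    (S : HA →L[ℂ] HA) (hSpos : S.IsPositive)
    (hSsq : S ∘L S = 1 + ContinuousLinearMap.adjoint X ∘L X)
    (Sinv : HA →L[ℂ] HA) (hSinv : S ∘L Sinv = 1) :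
    ‖X ∘L Sinv‖ = ‖X‖ / Real.sqrt (1 + ‖X‖ ^ 2) := by
  have hS := hSpos.isSelfAdjoint
  have hk : 0 < √(1 + ‖X‖ ^ 2) := by positivity
  have hSSinv (x : HA) : S (Sinv x) = x := by rw [← comp_apply, hSinv, one_apply_eq_self]
  -- `S` is bounded below by `1`, so the right inverse `Sinv` is also a left inverse
  have hSinvS (u : HA) : Sinv (S u) = u := by
    refine norm_sub_eq_zero_iff.1 (le_antisymm ?_ (norm_nonneg _))
    calc ‖Sinv (S u) - u‖
        ≤ ‖S (Sinv (S u) - u)‖ := norm_le_norm_apply_of_sq_eq_one_add_adjoint_comp hS hSsq _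
      _ = 0 := by rw [map_sub, hSSinv, sub_self, norm_zero]
  apply le_antisymm
  · refine opNorm_le_bound _ (by positivity) fun x => ?_
    rw [div_mul_eq_mul_div, le_div_iff₀ hk, mul_comm, comp_apply]
    simpa only [hSSinv] using
      sqrt_one_add_sq_mul_norm_apply_le_of_sq_eq_one_add_adjoint_comp hS hSsq (Sinv x)
  · refine (div_le_iff₀ hk).2 (opNorm_le_bound _ (by positivity) fun u => ?_)
    calc ‖X u‖ = ‖(X ∘L Sinv) (S u)‖ := by rw [comp_apply, hSinvS]
      _ ≤ ‖X ∘L Sinv‖ * ‖S u‖ := le_opNorm _ _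
      _ ≤ ‖X ∘L Sinv‖ * (√(1 + ‖X‖ ^ 2) * ‖u‖) := by
        gcongr
        exact norm_apply_le_sqrt_one_add_sq_mul_of_sq_eq_one_add_adjoint_comp hS hSsq u
      _ = ‖X ∘L Sinv‖ * √(1 + ‖X‖ ^ 2) * ‖u‖ := (mul_assoc _ _ _).symm
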